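/- arXiv:2301.13719 — 2 statements merged into one kernel-verified Lean document; each statement's English description precedes it below -/
import Mathlib

section
/- Let p, q be natural numbers and K an integer, and let B be the list consisting of p copies of −1, q copies of 1, and one copy of K. Then S_B = ([−p, q] ∪ [K − p, K + q]) ∩ ℤ. -/
/-!
Subset sums turn concatenation into the sumset, `S_{A ++ B} = S_A + S_B`. The blocks of `-1`s and
`1`s contribute `[-p, 0]` and `[0, q]`, whose sumset is `[-p, q]`, and the last entry contributes
`{0, K}`, i.e. the interval and its translate by `K`.
-/

/-- The set of all subset sums (sums of sub-multisets) of a list of integers. -/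
def subsetSums (B : List ℤ) : Set ℤ := {x | ∃ l : List ℤ, l.Sublist B ∧ l.sum = x}

open Pointwise

theorem Set.Icc_add_Icc_of_nonpos_of_nonneg {α : Type*} [AddCommGroup α] [LinearOrder α]
    [IsOrderedAddMonoid α] {a b : α} (ha : a ≤ 0) (hb : 0 ≤ b) :
    Icc a 0 + Icc 0 b = Icc a b := by
  refine (Icc_add_Icc_subset _ _ _ _).trans_eq (by rw [add_zero, zero_add]) |>.antisymm ?_
  rintro x ⟨hax, hxb⟩
  exact ⟨min x 0, ⟨le_min hax ha, min_le_right _ _⟩, max x 0, ⟨le_max_right _ _, max_le hxb hb⟩,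
    min_add_max x 0 |>.trans (add_zero x)⟩

theorem subsetSums_append (A B : List ℤ) :
    subsetSums (A ++ B) = subsetSums A + subsetSums B := by
  ext x
  simp only [subsetSums, List.sublist_append_iff, Set.mem_add, Set.mem_ofPred_eq]
  constructor
  · rintro ⟨_, ⟨lA, lB, rfl, hA, hB⟩, rfl⟩
    exact ⟨_, ⟨lA, hA, rfl⟩, _, ⟨lB, hB, rfl⟩, List.sum_append.symm⟩
  · rintro ⟨_, ⟨lA, hA, rfl⟩, _, ⟨lB, hB, rfl⟩, rfl⟩
    exact ⟨_, ⟨lA, lB, rfl, hA, hB⟩, List.sum_append⟩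

theorem subsetSums_singleton (a : ℤ) : subsetSums [a] = {0, a} := by
  ext x
  simp only [subsetSums, List.sublist_singleton, Set.mem_ofPred_eq, Set.mem_insert_iff,
    Set.mem_singleton_iff]
  constructor
  · rintro ⟨l, rfl | rfl, rfl⟩ <;> simp
  · rintro (rfl | rfl)
    exacts [⟨[], .inl rfl, rfl⟩, ⟨[_], .inr rfl, List.sum_singleton⟩]

theorem subsetSums_replicate (n : ℕ) (a : ℤ) :
    subsetSums (List.replicate n a) = (fun k : ℕ => (k : ℤ) * a) '' Set.Iic n := by
  ext x
  simp [subsetSums, List.sublist_replicate_iff]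

theorem subsetSums_replicate_one (n : ℕ) :
    subsetSums (List.replicate n 1) = Set.Icc 0 (n : ℤ) := by
  ext x
  simp only [subsetSums_replicate, mul_one, Set.mem_image, Set.mem_Iic, Set.mem_Icc]
  exact ⟨by omega, fun hx => ⟨x.toNat, by omega, by omega⟩⟩

theorem subsetSums_replicate_neg_one (n : ℕ) :
    subsetSums (List.replicate n (-1)) = Set.Icc (-(n : ℤ)) 0 := by
  ext x
  simp only [subsetSums_replicate, mul_neg_one, Set.mem_image, Set.mem_Iic, Set.mem_Icc]
  exact ⟨by omega, fun hx => ⟨(-x).toNat, by omega, by omega⟩⟩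

theorem subsetSums_replicate_with_K (p q : ℕ) (K : ℤ) :
    subsetSums (List.replicate p (-1 : ℤ) ++ List.replicate q (1 : ℤ) ++ [K]) =
      Set.Icc (-(p : ℤ)) (q : ℤ) ∪ Set.Icc (K - (p : ℤ)) (K + (q : ℤ)) := by
  rw [subsetSums_append, subsetSums_append, subsetSums_replicate_neg_one, subsetSums_replicate_one,
    Set.Icc_add_Icc_of_nonpos_of_nonneg (by simp) (by simp), subsetSums_singleton, Set.insert_eq,
    Set.add_union, Set.add_singleton, Set.add_singleton, Set.image_add_const_Icc,
    Set.image_add_const_Icc, add_zero, add_zero, neg_add_eq_sub, add_comm (q : ℤ)]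
end

section
/- Let d₁, …, dₙ be pairwise distinct non-zero rational numbers. Then there exist finite lists B(0), …, B(n) of non-zero rational numbers such that {0, d₁, …, dₙ} = ⋂_{i=0}^{n} S_{B(i)}. -/
/-- The set of all subset sums (sums of sub-multisets) of a list of rationals. -/
def subsetSumsQ (B : List ℚ) : Set ℚ := {x | ∃ l : List ℚ, l.Sublist B ∧ l.sum = x}

section Aux

lemma aux_den_add {p : ℕ} (hp : p.Prime) {x y : ℚ} (hx : ¬ p ∣ x.den) (hy : ¬ p ∣ y.den) :
    ¬ p ∣ (x + y).den := fun h =>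
  ((hp.dvd_mul.mp (h.trans (Rat.add_den_dvd x y)))).elim hx hy

lemma aux_den_sum {p : ℕ} (hp : p.Prime) (l : List ℚ) (h : ∀ x ∈ l, ¬ p ∣ x.den) :
    ¬ p ∣ l.sum.den := by
  induction l with
  | nil => simpa using hp.one_lt.ne'
  | cons a l ih =>
    simp only [List.sum_cons]
    exact aux_den_add hp (h a (by simp)) (ih fun x hx => h x (by simp [hx]))

lemma aux_den_div_prime {p : ℕ} (hp : p.Prime) {c : ℤ} (hc : ¬ (p : ℤ) ∣ c) :
    ((c : ℚ) / (p : ℚ)).den = p := by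
  have h0 : (0 : ℤ) < (p : ℤ) := by exact_mod_cast hp.pos
  have hcop : Nat.Coprime c.natAbs ((p : ℤ)).natAbs := by
    rw [Int.natAbs_natCast, Nat.coprime_comm]
    exact (Nat.Prime.coprime_iff_not_dvd hp).mpr (fun h => hc (Int.natCast_dvd.mpr h))
  have := Rat.den_div_eq_of_coprime h0 hcop
  exact_mod_cast this

lemma aux_key {p : ℕ} (hp : p.Prime) {c : ℤ} (hc : ¬ (p : ℤ) ∣ c) {x : ℚ}
    (hx : ¬ p ∣ x.den) : p ∣ (x + (c : ℚ) / (p : ℚ)).den := by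
  by_contra h
  have hneg : ¬ p ∣ (-x).den := by rwa [Rat.den_neg_eq_den]
  have h2 : ¬ p ∣ ((x + (c : ℚ) / (p : ℚ)) + (-x)).den := aux_den_add hp h hneg
  have : (x + (c : ℚ) / (p : ℚ)) + (-x) = (c : ℚ) / (p : ℚ) := by ring
  rw [this, aux_den_div_prime hp hc] at h2
  exact h2 dvd_rfl

lemma aux_sum_map_sub {n : ℕ} (d : Fin n → ℚ) (t : ℚ) (s : List (Fin n)) :
    (s.map (fun j => d j - t)).sum = (s.map d).sum - (s.length : ℚ) * t := by
  induction s with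
  | nil => simp
  | cons a s ih => simp [ih]; ring

end Aux

theorem arithmetical_decomposition_rational (n : ℕ) (d : Fin n → ℚ)
    (hd_inj : Function.Injective d) (hd_ne : ∀ i, d i ≠ 0) :
    ∃ B : Fin (n + 1) → List ℚ,
      (∀ i, ∀ b ∈ B i, b ≠ 0) ∧
      (insert (0 : ℚ) (Set.range d) = ⋂ i, subsetSumsQ (B i)) := by
  rcases Nat.eq_zero_or_pos n with hn | hn
  · subst hn
    refine ⟨fun _ => [], by simp, ?_⟩
    have hrange : Set.range d = ∅ := by
      simp [Set.range_eq_empty]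
    rw [hrange]
    ext x
    simp only [Set.mem_insert_iff, Set.mem_empty_iff_false, or_false, Set.mem_iInter]
    constructor
    · rintro rfl i; exact ⟨[], List.Sublist.refl _, rfl⟩
    · intro h
      obtain ⟨l, hl, hsum⟩ := h 0
      rw [List.sublist_nil.mp hl] at hsum
      simpa using hsum.symm
  · -- choose K bounding n and all denominators
    set K : ℕ := n + Finset.univ.sup (fun j => (d j).den) with hK
    obtain ⟨p, hpK, hp⟩ := Nat.exists_infinite_primes (K + 1)
    obtain ⟨q, hqp, hq⟩ := Nat.exists_infinite_primes (p + 1)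
    have hpq : p ≠ q := by omega
    have hpn : n < p := by omega
    have hqn : n < q := by omega
    have hsup : ∀ j, (d j).den ≤ Finset.univ.sup (fun j => (d j).den) := fun j =>
      Finset.le_sup (f := fun j => (d j).den) (Finset.mem_univ j)
    have hpd : ∀ j, ¬ p ∣ (d j).den := fun j hdvd => by
      have h1 := hsup j
      have h2 : p ≤ (d j).den := Nat.le_of_dvd (d j).pos hdvd
      omega
    have hqd : ∀ j, ¬ q ∣ (d j).den := fun j hdvd => by
      have h1 := hsup j
      have h2 : q ≤ (d j).den := Nat.le_of_dvd (d j).pos hdvd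
      omega
    -- prime for each index
    set pr : Fin (n + 1) → ℕ := fun i => if i = 0 then p else q with hpr
    have hprP : ∀ i, (pr i).Prime := fun i => by by_cases h : i = 0 <;> simp [hpr, h, hp, hq]
    have hprn : ∀ i, n < pr i := fun i => by by_cases h : i = 0 <;> simp [hpr, h, hpn, hqn]
    have hprd : ∀ i j, ¬ pr i ∣ (d j).den := fun i j => by
      by_cases h : i = 0 <;> simp [hpr, h, hpd j, hqd j]
    set t : Fin (n + 1) → ℚ := fun i => (1 : ℚ) / (pr i : ℚ) with ht
    have htne : ∀ i, t i ≠ 0 := fun i => by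
      have := (hprP i).pos
      simp [ht]
      positivity
    have htden : ∀ i, (t i).den = pr i := fun i => by
      have : ((1 : ℤ) : ℚ) = (1 : ℚ) := by norm_num
      rw [ht]
      simp only
      rw [← this]
      exact aux_den_div_prime (hprP i) (by
        rw [Int.natCast_dvd]
        simpa [Nat.dvd_one] using (hprP i).ne_one)
    refine ⟨fun i => t i :: List.ofFn (fun j => d j - t i), ?_, ?_⟩
    · intro i b hb
      rcases List.mem_cons.mp hb with rfl | hb
      · exact htne i
      · rw [List.mem_ofFn] at hb
        obtain ⟨j, rfl⟩ := hb
        intro h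
        have hdj : d j = t i := by linarith [sub_eq_zero.mp h]
        have := htden i
        rw [← hdj] at this
        exact hprd i j (this ▸ dvd_rfl)
    · ext x
      simp only [Set.mem_iInter]
      constructor
      · rintro (rfl | ⟨j, rfl⟩) i
        · exact ⟨[], List.nil_sublist _, rfl⟩
        · refine ⟨[t i, d j - t i], ?_, by simp⟩
          exact List.cons_sublist_cons.mpr (List.singleton_sublist.mpr (by simp [List.mem_ofFn]))
      · intro hx
        -- structure of subset sums
        have hrep : ∀ i, ∃ (s : List (Fin n)) (e : ℕ), e ≤ 1 ∧ s.length ≤ n ∧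
            (x ∈ insert (0:ℚ) (Set.range d) ∨
             (x = (s.map d).sum + ((e : ℚ) - s.length) * t i ∧ (e : ℤ) - s.length ≠ 0)) := by
          intro i
          obtain ⟨l, hl, hsum⟩ := hx i
          rw [List.sublist_cons_iff] at hl
          have hofFn : List.ofFn (fun j => d j - t i) = (List.finRange n).map (fun j => d j - t i) :=
            List.ofFn_eq_map
          rcases hl with hl | ⟨r, rfl, hr⟩
          · rw [hofFn, List.sublist_map_iff] at hl
            obtain ⟨s, hs, rfl⟩ := hl
            have hlen : s.length ≤ n := by simpa using hs.length_le
            refine ⟨s, 0, le_refl _ |>.trans (by norm_num), hlen, ?_⟩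
            rw [aux_sum_map_sub] at hsum
            by_cases hc : (0 : ℤ) - s.length = 0
            · have hs0 : s.length = 0 := by omega
              rw [List.length_eq_zero_iff.mp hs0] at hsum
              left; left; simp at hsum; exact hsum.symm
            · right
              exact ⟨by rw [← hsum]; push_cast; ring, hc⟩
          · rw [hofFn, List.sublist_map_iff] at hr
            obtain ⟨s, hs, rfl⟩ := hr
            have hlen : s.length ≤ n := by simpa using hs.length_le
            refine ⟨s, 1, le_refl _, hlen, ?_⟩
            rw [List.sum_cons, aux_sum_map_sub] at hsum
            by_cases hc : (1 : ℤ) - s.length = 0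
            · have hs1 : s.length = 1 := by omega
              obtain ⟨a, rfl⟩ := List.length_eq_one_iff.mp hs1
              left; right
              refine ⟨a, ?_⟩
              simp only [List.map_cons, List.map_nil, List.sum_cons, List.sum_nil,
                List.length_cons, List.length_nil] at hsum
              rw [← hsum]; push_cast; ring
            · right
              exact ⟨by rw [← hsum]; push_cast; ring, hc⟩
        by_contra hxD
        obtain ⟨s0, e0, he0, hl0, h0⟩ := hrep 0
        obtain ⟨s1, e1, he1, hl1, h1⟩ := hrep 1
        rcases h0 with h0 | ⟨hx0, hc0⟩
        · exact hxD h0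
        rcases h1 with h1 | ⟨hx1, hc1⟩
        · exact hxD h1
        -- from index 0: p ∣ x.den
        have h10 : (1 : Fin (n+1)) ≠ 0 := by
          have : (1 : ℕ) < n + 1 := by omega
          simp [Fin.ext_iff, Fin.val_one, Nat.mod_eq_of_lt this]
        have hpr0 : pr 0 = p := by simp [hpr]
        have hpr1 : pr 1 = q := by simp [hpr, h10]
        have hQ0 : ¬ p ∣ ((s0.map d).sum).den := by
          apply aux_den_sum hp
          intro y hy
          rw [List.mem_map] at hy
          obtain ⟨j, _, rfl⟩ := hy
          exact hpd j
        have hQ1 : ¬ p ∣ ((s1.map d).sum).den := by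
          apply aux_den_sum hp
          intro y hy
          rw [List.mem_map] at hy
          obtain ⟨j, _, rfl⟩ := hy
          exact hpd j
        set c0 : ℤ := (e0 : ℤ) - s0.length with hc0def
        set c1 : ℤ := (e1 : ℤ) - s1.length with hc1def
        have ht0 : t 0 = (1 : ℚ) / (p : ℚ) := by rw [ht]; simp only; rw [hpr0]
        have ht1 : t 1 = (1 : ℚ) / (q : ℚ) := by rw [ht]; simp only; rw [hpr1]
        have hx0' : x = (s0.map d).sum + (c0 : ℚ) / (p : ℚ) := by
          rw [hx0, ht0, hc0def]
          push_cast
          ring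
        have hx1' : x = (s1.map d).sum + (c1 : ℚ) / (q : ℚ) := by
          rw [hx1, ht1, hc1def]
          push_cast
          ring
        have hpc0 : ¬ (p : ℤ) ∣ c0 := by
          intro hdvd
          have habs : c0.natAbs ≤ n := by omega
          have : p ∣ c0.natAbs := Int.natCast_dvd.mp hdvd
          have := Nat.le_of_dvd (by omega) this
          omega
        have hdvd0 : p ∣ x.den := by
          rw [hx0']
          exact aux_key hp hpc0 hQ0
        have hqc1 : ¬ (q : ℤ) ∣ c1 := by
          intro hdvd
          have : q ∣ c1.natAbs := Int.natCast_dvd.mp hdvd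
          have := Nat.le_of_dvd (by omega) this
          omega
        have hden1 : ((c1 : ℚ) / (q : ℚ)).den = q := aux_den_div_prime hq hqc1
        have hndvd : ¬ p ∣ x.den := by
          rw [hx1']
          apply aux_den_add hp hQ1
          rw [hden1]
          intro hdvd
          exact hpq ((Nat.prime_dvd_prime_iff_eq hp hq).mp hdvd)
        exact hndvd hdvd0
end
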